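/- arXiv:1601.06591 — 4 statements merged into one kernel-verified Lean document; each statement's English description precedes it below -/
import Mathlib

section
/- Let φ : Σ → (−∞, 0] be a locally Hölder potential on the full shift Σ = ℕ^ℕ with pressure P(φ) = 0, and let s = inf{t : P(tφ) = ∞} < ∞. For any t > s there exists K(t) > 0 such that for every ergodic shift-invariant probability measure μ for which φ is integrable and h(μ, σ) > K(t), one has h(μ, σ) + t ∫ φ dμ < 0. -/
open Filter MeasureTheory

noncomputable section

/-- The left shift on `Σ = ℕ^ℕ`. -/
def shift (x : ℕ → ℕ) : ℕ → ℕ := fun n => x (n + 1)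

/-! Pick `t'` strictly between `s` and `t`. Since `P(t'φ) < ∞`, the variational principle bounds
`h(μ) + t' ∫ φ dμ` by a finite `M` for every admissible `μ`. As `∫ φ dμ ≤ 0`, passing from `t'`
to `t` lowers `t' (h(μ) + t ∫ φ dμ)` to at most `t M - (t - t') h(μ)`, which is negative once
`h(μ)` is large (for `t' ≤ 0` the bound alone already forces `h(μ) ≤ M`). -/

lemma add_mul_neg_of_add_mul_le {h I t' t M : ℝ} (hI : I ≤ 0) (htt' : t' < t)
    (hM : h + t' * I ≤ M) (hMh : M < h) (hK : t * M / (t - t') < h) : h + t * I < 0 := by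
  rcases le_or_gt t' 0 with ht' | ht'
  · nlinarith [mul_nonneg_of_nonpos_of_nonpos ht' hI]
  · have hKt : t * M < h * (t - t') := (div_lt_iff₀ (by linarith)).mp hK
    have hscaled : t * (h + t' * I) ≤ t * M := mul_le_mul_of_nonneg_left hM (by linarith)
    have : t' * (h + t * I) < 0 := by nlinarith
    exact neg_of_mul_neg_right this ht'.le

theorem high_entropy_negative_pressure_general (φ : (ℕ → ℕ) → ℝ)
    (hφle : ∀ x, φ x ≤ 0)
    (Press : ℝ → EReal) (entH : Measure (ℕ → ℕ) → ℝ)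
    (hVP : ∀ t : ℝ, ∀ μ : Measure (ℕ → ℕ), IsProbabilityMeasure μ → Ergodic shift μ →
      Integrable φ μ → ((entH μ + t * ∫ x, φ x ∂μ : ℝ) : EReal) ≤ Press t)
    (s : ℝ)
    (hs₁ : ∀ t : ℝ, s < t → Press t ≠ ⊤) :
    ∀ t : ℝ, s < t → ∃ K : ℝ, 0 < K ∧
      ∀ μ : Measure (ℕ → ℕ), IsProbabilityMeasure μ → Ergodic shift μ →
        Integrable φ μ → K < entH μ → entH μ + t * ∫ x, φ x ∂μ < 0 := by
  intro t hst
  obtain ⟨t', hst', ht't⟩ := exists_between hst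
  set M := (Press t').toReal
  have hPM : Press t' ≤ M := EReal.le_coe_toReal (hs₁ t' hst')
  refine ⟨max (max M (t * M / (t - t'))) 1, by positivity, ?_⟩
  intro μ hμ herg hint hK
  have hVP' : entH μ + t' * ∫ x, φ x ∂μ ≤ M := by
    exact_mod_cast (hVP t' μ hμ herg hint).trans hPM
  exact add_mul_neg_of_add_mul_le (integral_nonpos hφle) ht't hVP'
    (by linarith [le_max_left M (t * M / (t - t')), le_max_left (max M (t * M / (t - t'))) 1])
    (by linarith [le_max_right M (t * M / (t - t')), le_max_left (max M (t * M / (t - t'))) 1])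

/-- Let `φ ≤ 0` be locally Hölder with pressure `P(φ) = 0` and
`s = inf{t : P(tφ) = ∞} < ∞`.  Then for any `t > s` there is `K(t) > 0` such that every
ergodic shift-invariant probability measure `μ` with `φ` integrable and `h(μ,σ) > K(t)`
satisfies `h(μ,σ) + t ∫ φ dμ < 0`. -/
theorem high_entropy_negative_pressure (φ : (ℕ → ℕ) → ℝ)
    (hφle : ∀ x, φ x ≤ 0)
    (hloc : ∃ C > (0:ℝ), ∃ δ ∈ Set.Ioo (0:ℝ) 1, ∀ n : ℕ, 1 ≤ n →
      ∀ x y : ℕ → ℕ, (∀ m < n, x m = y m) → |φ x - φ y| ≤ C * δ ^ n)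
    (Press : ℝ → EReal) (entH : Measure (ℕ → ℕ) → ℝ)
    (hP1 : Press 1 = 0)
    (hVP : ∀ t : ℝ, ∀ μ : Measure (ℕ → ℕ), IsProbabilityMeasure μ → Ergodic shift μ →
      Integrable φ μ → ((entH μ + t * ∫ x, φ x ∂μ : ℝ) : EReal) ≤ Press t)
    (s : ℝ)
    (hs₁ : ∀ t : ℝ, s < t → Press t ≠ ⊤)
    (hs₂ : ∀ t : ℝ, t < s → Press t = ⊤) :
    ∀ t : ℝ, s < t → ∃ K : ℝ, 0 < K ∧
      ∀ μ : Measure (ℕ → ℕ), IsProbabilityMeasure μ → Ergodic shift μ →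
        Integrable φ μ → K < entH μ → entH μ + t * ∫ x, φ x ∂μ < 0 :=
  high_entropy_negative_pressure_general φ hφle Press entH hVP s hs₁
end
end

section
/- Let φ, ψ : {0,1}^ℕ → ℝ be potentials with summable variations and C = 2·max(Σ_{k≥1} var_k(φ), Σ_{k≥1} var_k(ψ)) + 2·max(var_0(φ), var_0(ψ)). If two level-n words x, y differ in exactly one coordinate, then for all ω, τ ∈ [x] ∪ [y] one has |S_n φ(ω) − S_n φ(τ)| ≤ C and |S_n ψ(ω) − S_n ψ(τ)| ≤ C. -/
/-!
Along the orbit segment `i < n`, the shifted points `σⁱω` and `σⁱτ` agree on their first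
`j - i` coordinates while `i ≤ j`, and on their first `n - i` coordinates once `i > j`,
because `ω` and `τ` agree on `[0, n)` except at `j`. Summing the variations, the first block
contributes `var₀ + ∑_{k<j} var_{k+1}` and the second `∑_{k<n-j-1} var_{k+1}`, each tail bounded
by the full sum.
-/

open Filter

noncomputable section

/-- The left shift on the full shift over two symbols. -/
def shift2 (x : ℕ → Fin 2) : ℕ → Fin 2 := fun n => x (n + 1)

/-- Birkhoff sum `S_n h`. -/
def birk2 (h : (ℕ → Fin 2) → ℝ) (n : ℕ) (x : ℕ → Fin 2) : ℝ :=
  ∑ i ∈ Finset.range n, h (shift2^[i] x)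

open Finset

def IsVariationBound {α : Type*} (h : (ℕ → α) → ℝ) (v : ℕ → ℝ) : Prop :=
  ∀ k : ℕ, ∀ a b : ℕ → α, (∀ m < k, a m = b m) → |h a - h b| ≤ v k

theorem IsVariationBound.nonneg {α : Type*} [Nonempty α] {h : (ℕ → α) → ℝ} {v : ℕ → ℝ}
    (hv : IsVariationBound h v) (k : ℕ) : 0 ≤ v k := by
  simpa using hv k (Classical.arbitrary _) (Classical.arbitrary _) fun _ _ => rfl

theorem shift2_iterate_apply (x : ℕ → Fin 2) (i m : ℕ) : shift2^[i] x m = x (m + i) := by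
  induction i generalizing x with
  | zero => rfl
  | succ i ih => rw [Function.iterate_succ_apply, ih, shift2, Nat.add_assoc, Nat.add_comm i]

theorem abs_sub_shift2_iterate_le {h : (ℕ → Fin 2) → ℝ} {v : ℕ → ℝ}
    (hv : IsVariationBound h v) {ω τ : ℕ → Fin 2} {i k : ℕ}
    (hagree : ∀ m < k, ω (m + i) = τ (m + i)) :
    |h (shift2^[i] ω) - h (shift2^[i] τ)| ≤ v k :=
  hv k _ _ fun m hm => by simpa only [shift2_iterate_apply] using hagree m hm

theorem abs_birk2_sub_le {h : (ℕ → Fin 2) → ℝ} {v : ℕ → ℝ} (hv : IsVariationBound h v)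
    (hsum : Summable fun k => v (k + 1)) {n j : ℕ} (hj : j < n) {ω τ : ℕ → Fin 2}
    (hagree : ∀ m < n, m ≠ j → ω m = τ m) :
    |birk2 h n ω - birk2 h n τ| ≤ 2 * ∑' k, v (k + 1) + v 0 := by
  obtain ⟨r, rfl⟩ : ∃ r, n = j + 1 + r := ⟨n - (j + 1), by omega⟩
  set d : ℕ → ℝ := fun i => h (shift2^[i] ω) - h (shift2^[i] τ)
  have hhead : ∀ i ∈ range (j + 1), |d i| ≤ v (j - i) := fun i hi =>
    abs_sub_shift2_iterate_le hv fun m hm => hagree _ (by omega) (by simp at hi; omega)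
  have htail : ∀ t ∈ range r, |d (j + 1 + t)| ≤ v (r - t) := fun t ht =>
    abs_sub_shift2_iterate_le hv fun m hm => hagree _ (by simp at ht; omega) (by omega)
  have hhead_sum : ∑ i ∈ range (j + 1), v (j - i) = v 0 + ∑ k ∈ range j, v (k + 1) := by
    have hreflect := sum_range_reflect v (j + 1)
    rw [Nat.add_sub_cancel] at hreflect
    rw [hreflect, sum_range_succ', add_comm]
  have htail_sum : ∑ t ∈ range r, v (r - t) = ∑ k ∈ range r, v (k + 1) := by
    rw [← sum_range_reflect (fun k => v (k + 1))]
    exact sum_congr rfl fun t ht => by simp at ht; congr 1; omega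
  have hpartial (N : ℕ) : ∑ k ∈ range N, v (k + 1) ≤ ∑' k, v (k + 1) :=
    hsum.sum_le_tsum _ fun k _ => hv.nonneg (k + 1)
  calc |birk2 h (j + 1 + r) ω - birk2 h (j + 1 + r) τ|
      = |∑ i ∈ range (j + 1), d i + ∑ t ∈ range r, d (j + 1 + t)| := by
        rw [birk2, birk2, ← sum_sub_distrib, sum_range_add]
    _ ≤ ∑ i ∈ range (j + 1), |d i| + ∑ t ∈ range r, |d (j + 1 + t)| :=
        (abs_add_le _ _).trans (add_le_add (abs_sum_le_sum_abs _ _) (abs_sum_le_sum_abs _ _))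
    _ ≤ ∑ i ∈ range (j + 1), v (j - i) + ∑ t ∈ range r, v (r - t) :=
        add_le_add (sum_le_sum hhead) (sum_le_sum htail)
    _ ≤ 2 * ∑' k, v (k + 1) + v 0 := by
        rw [hhead_sum, htail_sum]
        linarith [hpartial j, hpartial r]

theorem eq_of_mem_cylinder_union {α : Type*} {n : ℕ} {x y : Fin n → α} {j : Fin n}
    (hxy : ∀ m : Fin n, m ≠ j → x m = y m) {ω τ : ℕ → α}
    (hω : (∀ m : Fin n, ω m = x m) ∨ (∀ m : Fin n, ω m = y m))
    (hτ : (∀ m : Fin n, τ m = x m) ∨ (∀ m : Fin n, τ m = y m)) :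
    ∀ m < n, m ≠ j → ω m = τ m := by
  intro m hm hmj
  have hxy' := hxy ⟨m, hm⟩ (Fin.ne_of_val_ne hmj)
  rcases hω with hω | hω <;> rcases hτ with hτ | hτ <;>
    simp only [hω ⟨m, hm⟩, hτ ⟨m, hm⟩, hxy']

theorem neighbours_birkhoff_bound_general (φ ψ : (ℕ → Fin 2) → ℝ) (varφ varψ : ℕ → ℝ)
    (hφ : ∀ k : ℕ, ∀ a b : ℕ → Fin 2, (∀ m < k, a m = b m) → |φ a - φ b| ≤ varφ k)
    (hψ : ∀ k : ℕ, ∀ a b : ℕ → Fin 2, (∀ m < k, a m = b m) → |ψ a - ψ b| ≤ varψ k)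
    (hφsum : Summable (fun k : ℕ => varφ (k + 1)))
    (hψsum : Summable (fun k : ℕ => varψ (k + 1)))
    (n : ℕ) (x y : Fin n → Fin 2) (j : Fin n)
    (hdiff : x j ≠ y j ∧ ∀ m : Fin n, m ≠ j → x m = y m)
    (ω τ : ℕ → Fin 2)
    (hω : (∀ m : Fin n, ω m = x m) ∨ (∀ m : Fin n, ω m = y m))
    (hτ : (∀ m : Fin n, τ m = x m) ∨ (∀ m : Fin n, τ m = y m)) :
    |birk2 φ n ω - birk2 φ n τ| ≤
        2 * max (∑' k : ℕ, varφ (k + 1)) (∑' k : ℕ, varψ (k + 1)) +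
          2 * max (varφ 0) (varψ 0) ∧
      |birk2 ψ n ω - birk2 ψ n τ| ≤
        2 * max (∑' k : ℕ, varφ (k + 1)) (∑' k : ℕ, varψ (k + 1)) +
          2 * max (varφ 0) (varψ 0) := by
  have hagree := eq_of_mem_cylinder_union hdiff.2 hω hτ
  have hφn := abs_birk2_sub_le hφ hφsum j.isLt hagree
  have hψn := abs_birk2_sub_le hψ hψsum j.isLt hagree
  have hφ0 := IsVariationBound.nonneg hφ 0
  have hψ0 := IsVariationBound.nonneg hψ 0
  constructor <;>
    linarith [le_max_left (∑' k, varφ (k + 1)) (∑' k, varψ (k + 1)),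
      le_max_right (∑' k, varφ (k + 1)) (∑' k, varψ (k + 1)),
      le_max_left (varφ 0) (varψ 0), le_max_right (varφ 0) (varψ 0)]

/-- For potentials with summable variations, Birkhoff sums over the union of two cylinders
whose words differ in exactly one coordinate differ by at most the uniform constant
`C = 2 max(∑_{k≥1} var_k φ, ∑_{k≥1} var_k ψ) + 2 max(var_0 φ, var_0 ψ)`. -/
theorem neighbours_birkhoff_bound (φ ψ : (ℕ → Fin 2) → ℝ) (varφ varψ : ℕ → ℝ)
    (hvarφ0 : ∀ k, 0 ≤ varφ k) (hvarψ0 : ∀ k, 0 ≤ varψ k)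
    (hφ : ∀ k : ℕ, ∀ a b : ℕ → Fin 2, (∀ m < k, a m = b m) → |φ a - φ b| ≤ varφ k)
    (hψ : ∀ k : ℕ, ∀ a b : ℕ → Fin 2, (∀ m < k, a m = b m) → |ψ a - ψ b| ≤ varψ k)
    (hφsum : Summable (fun k : ℕ => varφ (k + 1)))
    (hψsum : Summable (fun k : ℕ => varψ (k + 1)))
    (n : ℕ) (x y : Fin n → Fin 2) (j : Fin n)
    (hdiff : x j ≠ y j ∧ ∀ m : Fin n, m ≠ j → x m = y m)
    (ω τ : ℕ → Fin 2)
    (hω : (∀ m : Fin n, ω m = x m) ∨ (∀ m : Fin n, ω m = y m))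
    (hτ : (∀ m : Fin n, τ m = x m) ∨ (∀ m : Fin n, τ m = y m)) :
    |birk2 φ n ω - birk2 φ n τ| ≤
        2 * max (∑' k : ℕ, varφ (k + 1)) (∑' k : ℕ, varψ (k + 1)) +
          2 * max (varφ 0) (varψ 0) ∧
      |birk2 ψ n ω - birk2 ψ n τ| ≤
        2 * max (∑' k : ℕ, varφ (k + 1)) (∑' k : ℕ, varψ (k + 1)) +
          2 * max (varφ 0) (varψ 0) :=
  neighbours_birkhoff_bound_general φ ψ varφ varψ hφ hψ hφsum hψsum n x y j hdiff ω τ hω hτ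
end
end

section
/- Let α_D be the dyadic partition with lengths a_n = 2^{−n}, and for each k let α_k be the partition with a_n(α_k) = 2^{−n} for n ∉ {k, k+1}, a_k(α_k) = 2^{−k²} and a_{k+1}(α_k) = 2^{−k} + 2^{−(k+1)} − 2^{−k²}. Then inf{ log a_n(α_D) / log a_n(α_k) : n ∈ ℕ } = 1/k for every k ≥ 2. -/
/-! The ratio `log a_m(α_D) / log a_m(α_k)` is `1` away from `m ∈ {k, k+1}`, equals `k / k² = 1/k`
at `m = k`, and is at least `1` at `m = k+1` because there `2^{-(k+1)} ≤ a_{k+1}(α_k) < 1`. -/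

noncomputable section

/-- The lengths of the modified partition `α_k`: `a_n(α_k) = 2^{-n}` for `n ∉ {k,k+1}`,
`a_k(α_k) = 2^{-k²}` and `a_{k+1}(α_k) = 2^{-k} + 2^{-(k+1)} - 2^{-k²}`. -/
def aK (k n : ℕ) : ℝ :=
  if n = k then (2 : ℝ) ^ (-((k : ℝ)) ^ 2)
  else if n = k + 1 then
    (2 : ℝ) ^ (-(k : ℝ)) + (2 : ℝ) ^ (-((k : ℝ) + 1)) - (2 : ℝ) ^ (-((k : ℝ)) ^ 2)
  else (2 : ℝ) ^ (-(n : ℝ))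

open Real

lemma Real.log_two_rpow (x : ℝ) : log ((2 : ℝ) ^ x) = x * log 2 :=
  log_rpow two_pos x

lemma one_le_log_div_log_of_le_of_lt_one {a b : ℝ} (hb : 0 < b) (hba : b ≤ a) (ha : a < 1) :
    1 ≤ log b / log a :=
  (one_le_div_of_neg (log_neg (hb.trans_le hba) ha)).2 (log_le_log hb hba)

namespace aK

lemma self (k : ℕ) : aK k k = (2 : ℝ) ^ (-((k : ℝ)) ^ 2) := if_pos rfl

lemma of_ne {k m : ℕ} (h₁ : m ≠ k) (h₂ : m ≠ k + 1) : aK k m = (2 : ℝ) ^ (-(m : ℝ)) := by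
  simp only [aK, if_neg h₁, if_neg h₂]

lemma succ (k : ℕ) : aK k (k + 1) =
    (2 : ℝ) ^ (-(k : ℝ)) + (2 : ℝ) ^ (-((k : ℝ) + 1)) - (2 : ℝ) ^ (-((k : ℝ)) ^ 2) := by
  simp [aK]

lemma two_rpow_le_succ (k : ℕ) : (2 : ℝ) ^ (-((k : ℝ) + 1)) ≤ aK k (k + 1) := by
  have hsq : (2 : ℝ) ^ (-((k : ℝ)) ^ 2) ≤ (2 : ℝ) ^ (-(k : ℝ)) :=
    rpow_le_rpow_of_exponent_le one_le_two
      (neg_le_neg (by exact_mod_cast Nat.le_self_pow two_ne_zero k))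
  rw [succ]
  linarith

lemma succ_lt_one {k : ℕ} (hk : 1 ≤ k) : aK k (k + 1) < 1 := by
  have hk' : (1 : ℝ) ≤ k := by exact_mod_cast hk
  have h₁ : (2 : ℝ) ^ (-(k : ℝ)) ≤ 2 ^ (-1 : ℝ) :=
    rpow_le_rpow_of_exponent_le one_le_two (by linarith)
  have h₂ : (2 : ℝ) ^ (-((k : ℝ) + 1)) ≤ 2 ^ (-1 : ℝ) :=
    rpow_le_rpow_of_exponent_le one_le_two (by linarith)
  have hhalf : (2 : ℝ) ^ (-1 : ℝ) = 1 / 2 := by norm_num [rpow_neg_one]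
  have hpos : 0 < (2 : ℝ) ^ (-((k : ℝ)) ^ 2) := rpow_pos_of_pos two_pos _
  rw [hhalf] at h₁ h₂
  rw [succ]
  linarith

end aK

/-- The ratio `log a_m(α_D) / log a_m(α_k)`, with `a_m(α_D) = 2^{-m}`. -/
def holderRatio (k m : ℕ) : ℝ := log ((2 : ℝ) ^ (-(m : ℝ))) / log (aK k m)

lemma holderRatio_self {k : ℕ} (hk : k ≠ 0) : holderRatio k k = 1 / k := by
  have hk' : (k : ℝ) ≠ 0 := Nat.cast_ne_zero.2 hk
  have hlog2 : log 2 ≠ 0 := (log_pos one_lt_two).ne'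
  rw [holderRatio, aK.self, log_two_rpow, log_two_rpow]
  field_simp

lemma one_le_holderRatio_succ {k : ℕ} (hk : 1 ≤ k) : 1 ≤ holderRatio k (k + 1) := by
  rw [holderRatio, Nat.cast_succ]
  exact one_le_log_div_log_of_le_of_lt_one (rpow_pos_of_pos two_pos _)
    (aK.two_rpow_le_succ k) (aK.succ_lt_one hk)

lemma holderRatio_of_ne {k m : ℕ} (hm : m ≠ 0) (h₁ : m ≠ k) (h₂ : m ≠ k + 1) :
    holderRatio k m = 1 := by
  have hm' : (m : ℝ) ≠ 0 := Nat.cast_ne_zero.2 hm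
  rw [holderRatio, aK.of_ne h₁ h₂, log_two_rpow]
  exact div_self (mul_ne_zero (neg_ne_zero.2 hm') (log_pos one_lt_two).ne')

lemma one_div_le_holderRatio {k m : ℕ} (hk : 1 ≤ k) (hm : m ≠ 0) :
    1 / (k : ℝ) ≤ holderRatio k m := by
  have hle_one : 1 / (k : ℝ) ≤ 1 := div_le_one_of_le₀ (by exact_mod_cast hk) (Nat.cast_nonneg k)
  rcases eq_or_ne m k with rfl | h₁
  · exact (holderRatio_self hm).ge
  rcases eq_or_ne m (k + 1) with rfl | h₂
  · exact hle_one.trans (one_le_holderRatio_succ hk)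
  · exact hle_one.trans (holderRatio_of_ne hm h₁ h₂).ge

lemma isLeast_holderRatio {k : ℕ} (hk : 1 ≤ k) :
    IsLeast (Set.range fun n : ℕ => holderRatio k (n + 1)) (1 / k) := by
  refine ⟨⟨k - 1, ?_⟩, ?_⟩
  · simp only [Nat.sub_add_cancel hk, holderRatio_self (by omega : k ≠ 0)]
  · rintro _ ⟨n, rfl⟩
    exact one_div_le_holderRatio hk n.succ_ne_zero

/-- The Hölder exponent computation:
`inf_{n ≥ 1} log a_n(α_D) / log a_n(α_k) = 1/k` for `k ≥ 2`, where `a_n(α_D) = 2^{-n}`. -/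
theorem holder_exponent_inf (k : ℕ) (hk : 2 ≤ k) :
    (⨅ n : ℕ, Real.log ((2 : ℝ) ^ (-((n : ℝ) + 1))) / Real.log (aK k (n + 1))) =
      1 / (k : ℝ) := by
  have h := (isLeast_holderRatio (by omega : 1 ≤ k)).isGLB.ciInf_eq
  simpa only [holderRatio, Nat.cast_succ] using h
end
end

section
/- Let φ, ψ : Σ_N → ℝ be Hölder potentials on the full shift on N symbols, with ψ strictly negative, and define Z(q) = P(q(φ−ψ) + tψ) for fixed t. Suppose Z is differentiable with Z'(q) = ∫(φ−ψ) dμ_q (μ_q the Gibbs state of q(φ−ψ)+tψ), Z(q) → ∞ as q → ±∞, and inf_q Z(q) > 0. Then there exists q₁ with Z'(q₁) = 0, and the Gibbs measure μ = μ_{q₁} satisfies ∫ φ dμ = ∫ ψ dμ and h(μ,σ) + t ∫ ψ dμ > 0, hence h(μ,σ)/(−∫ψ dμ) > t. -/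
/-!
A pressure function that is coercive attains a global minimum at some `q₁`, where its
derivative `∫ (φ - ψ) dμ_{q₁}` vanishes. The variational formula for `Z(q₁)` then loses its
`q₁`-term, so `h(μ_{q₁}) + t ∫ ψ dμ_{q₁} = Z(q₁) ≥ inf Z > 0`, and dividing by
`-∫ ψ dμ_{q₁} > 0` gives the entropy bound.
-/

open Filter MeasureTheory

noncomputable section

/-- The left shift on the full shift over `N` symbols. -/
def shiftF {N : ℕ} (x : ℕ → Fin N) : ℕ → Fin N := fun n => x (n + 1)

theorem exists_hasDerivAt_eq_zero_forall_le {f f' : ℝ → ℝ} (hf : ∀ x, HasDerivAt f (f' x) x)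
    (htop : Tendsto f atTop atTop) (hbot : Tendsto f atBot atTop) :
    ∃ x₀, f' x₀ = 0 ∧ ∀ x, f x₀ ≤ f x := by
  have hcont : Continuous f := continuous_iff_continuousAt.2 fun x => (hf x).continuousAt
  have hcocompact : Tendsto f (cocompact ℝ) atTop := by
    rw [cocompact_eq_atBot_atTop]
    exact hbot.sup htop
  obtain ⟨x₀, hmin⟩ := hcont.exists_forall_le hcocompact
  exact ⟨x₀, IsLocalMin.hasDerivAt_eq_zero (Eventually.of_forall hmin) (hf x₀), hmin⟩

theorem integral_neg_of_forall_neg {α : Type*} [MeasurableSpace α] {μ : Measure α} [NeZero μ]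
    {f : α → ℝ} (hf : ∀ x, f x < 0) (hfi : Integrable f μ) : ∫ x, f x ∂μ < 0 := by
  have hpos : 0 < ∫ x, -f x ∂μ := by
    refine (integral_pos_iff_support_of_nonneg (fun x => (neg_pos.2 (hf x)).le) hfi.neg).2 ?_
    rw [Function.support_eq_univ fun x => (neg_pos.2 (hf x)).ne']
    exact Measure.measure_univ_pos.2 (NeZero.ne μ)
  rw [integral_neg] at hpos
  linarith

theorem integral_mul_add_mul {α : Type*} [MeasurableSpace α] {μ : Measure α} {f g : α → ℝ}
    (hf : Integrable f μ) (hg : Integrable g μ) (a b : ℝ) :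
    ∫ x, (a * f x + b * g x) ∂μ = a * ∫ x, f x ∂μ + b * ∫ x, g x ∂μ := by
  rw [integral_add (hf.const_mul a) (hg.const_mul b), integral_const_mul, integral_const_mul]

theorem pressure_minimum_gibbs_general {N : ℕ} (φ ψ : (ℕ → Fin N) → ℝ)
    (hφc : Continuous φ) (hψc : Continuous ψ)
    (hψneg : ∀ x, ψ x < 0) (t : ℝ)
    (μ : ℝ → Measure (ℕ → Fin N)) (hprob : ∀ q, IsProbabilityMeasure (μ q))
    (entH : Measure (ℕ → Fin N) → ℝ)
    (Z : ℝ → ℝ)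
    (hZdef : ∀ q, Z q = entH (μ q) + ∫ x, (q * (φ x - ψ x) + t * ψ x) ∂(μ q))
    (hZderiv : ∀ q, HasDerivAt Z (∫ x, (φ x - ψ x) ∂(μ q)) q)
    (htop : Tendsto Z atTop atTop) (hbot : Tendsto Z atBot atTop)
    (hinf : ∃ ε > (0:ℝ), ∀ q, ε ≤ Z q) :
    ∃ q₁ : ℝ, (∫ x, (φ x - ψ x) ∂(μ q₁)) = 0 ∧
      (∫ x, φ x ∂(μ q₁)) = ∫ x, ψ x ∂(μ q₁) ∧
      0 < entH (μ q₁) + t * ∫ x, ψ x ∂(μ q₁) ∧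
      t < entH (μ q₁) / (-∫ x, ψ x ∂(μ q₁)) := by
  obtain ⟨q₁, hcrit, -⟩ := exists_hasDerivAt_eq_zero_forall_le hZderiv htop hbot
  have := hprob q₁
  have hφi : Integrable φ (μ q₁) := hφc.integrable_of_hasCompactSupport (.of_compactSpace φ)
  have hψi : Integrable ψ (μ q₁) := hψc.integrable_of_hasCompactSupport (.of_compactSpace ψ)
  have hmeans : ∫ x, φ x ∂(μ q₁) = ∫ x, ψ x ∂(μ q₁) := by
    rw [integral_sub hφi hψi] at hcrit
    linarith
  have hZq₁ : Z q₁ = entH (μ q₁) + t * ∫ x, ψ x ∂(μ q₁) := by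
    rw [hZdef, integral_mul_add_mul (f := fun x => φ x - ψ x) (hφi.sub hψi) hψi, hcrit,
      mul_zero, zero_add]
  obtain ⟨ε, hε, hεZ⟩ := hinf
  have hpos : 0 < entH (μ q₁) + t * ∫ x, ψ x ∂(μ q₁) := hZq₁ ▸ hε.trans_le (hεZ q₁)
  have hψmean : ∫ x, ψ x ∂(μ q₁) < 0 := integral_neg_of_forall_neg hψneg hψi
  refine ⟨q₁, hcrit, hmeans, hpos, ?_⟩
  rw [lt_div_iff₀ (neg_pos.2 hψmean)]
  linarith

/-- Lemma 4.6: if the pressure function `Z(q) = P(q(φ-ψ) + tψ)` has derivative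
`Z'(q) = ∫(φ-ψ) dμ_q`, tends to `∞` at `±∞` and has strictly positive infimum, then there
is `q₁` with `Z'(q₁) = 0`, and the Gibbs state `μ = μ_{q₁}` satisfies `∫φ dμ = ∫ψ dμ` and
`h(μ,σ) + t ∫ψ dμ > 0`, hence `h(μ,σ)/(-∫ψ dμ) > t`. -/
theorem pressure_minimum_gibbs {N : ℕ} (hN : 0 < N) (φ ψ : (ℕ → Fin N) → ℝ)
    (hφc : Continuous φ) (hψc : Continuous ψ)
    (hφHolder : ∃ C > (0:ℝ), ∃ δ ∈ Set.Ioo (0:ℝ) 1, ∀ n : ℕ, 1 ≤ n →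
      ∀ x y : ℕ → Fin N, (∀ m < n, x m = y m) → |φ x - φ y| ≤ C * δ ^ n)
    (hψHolder : ∃ C > (0:ℝ), ∃ δ ∈ Set.Ioo (0:ℝ) 1, ∀ n : ℕ, 1 ≤ n →
      ∀ x y : ℕ → Fin N, (∀ m < n, x m = y m) → |ψ x - ψ y| ≤ C * δ ^ n)
    (hψneg : ∀ x, ψ x < 0) (t : ℝ)
    (μ : ℝ → Measure (ℕ → Fin N)) (hprob : ∀ q, IsProbabilityMeasure (μ q))
    (entH : Measure (ℕ → Fin N) → ℝ)
    (Z : ℝ → ℝ)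
    (hZdef : ∀ q, Z q = entH (μ q) + ∫ x, (q * (φ x - ψ x) + t * ψ x) ∂(μ q))
    (hZderiv : ∀ q, HasDerivAt Z (∫ x, (φ x - ψ x) ∂(μ q)) q)
    (htop : Tendsto Z atTop atTop) (hbot : Tendsto Z atBot atTop)
    (hinf : ∃ ε > (0:ℝ), ∀ q, ε ≤ Z q) :
    ∃ q₁ : ℝ, (∫ x, (φ x - ψ x) ∂(μ q₁)) = 0 ∧
      (∫ x, φ x ∂(μ q₁)) = ∫ x, ψ x ∂(μ q₁) ∧
      0 < entH (μ q₁) + t * ∫ x, ψ x ∂(μ q₁) ∧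
      t < entH (μ q₁) / (-∫ x, ψ x ∂(μ q₁)) :=
  pressure_minimum_gibbs_general φ ψ hφc hψc hψneg t μ hprob entH Z hZdef hZderiv htop hbot hinf
end
end
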